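/- Let i, j, r be integers with i ≥ 2, j ≥ i + 2 and r ≥ 2. Then the following identity holds in ℚ(t): P_j·P_{j+r−2}/(P_i·P_{j−i}·P_r·P_{j−2}) = P_{r+i−2}·P_{r+j}/(P_r·P_{i−2}·P_{r+i}·P_{j−i}) + t^{2(i−1)}·P_2·P_{r+i−2}·P_{r+j−1}/(P_{r−1}·P_{i−1}·P_{r+i}·P_{j−i−1}) + t^{4i}·P_2·P_{r+i−2}·P_{r+j−2}/(P_2·P_{r−2}·P_i·P_{r+i}·P_{j−i−2}). -/

import Mathlib

/-!
With `q = t²`, `h_α` is the `q`-integer `[α + 1]_q` and `P_α` is the `q`-factorial `[α]_q!`.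
Write `i = a + 2`, `j = a + b + 4`, `r = c + 2`. Multiplying the identity by
`P_i P_{j-i} P_r [r+i-1]_q [r+i]_q / P_{r+j-2}` turns each of its four terms into a product of
four or five `q`-integers, and the resulting identity between `q`-integers follows by clearing
denominators in `[n]_q = (qⁿ - 1) / (q - 1)`.
-/

open Polynomial

/-- `hpoly α = 1 + t^2 + ⋯ + t^{2α}` for `α ≥ 0`. -/
noncomputable def hpoly (α : ℤ) : Polynomial ℚ :=
  ∑ m ∈ Finset.range (α.toNat + 1), X ^ (2 * m)

/-- `Ppoly 0 = 1` and `Ppoly α = hpoly 0 ⋯ hpoly (α-1)` for `α > 0`. -/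
noncomputable def Ppoly (α : ℤ) : Polynomial ℚ :=
  ∏ m ∈ Finset.range α.toNat, hpoly (m : ℤ)

/-- The image of `hpoly α` in the field of rational functions `ℚ(t)`. -/
noncomputable def hQ (α : ℤ) : RatFunc ℚ :=
  algebraMap (Polynomial ℚ) (RatFunc ℚ) (hpoly α)

/-- The image of `Ppoly α` in the field of rational functions `ℚ(t)`. -/
noncomputable def PQ (α : ℤ) : RatFunc ℚ :=
  algebraMap (Polynomial ℚ) (RatFunc ℚ) (Ppoly α)

/-- The variable `t` of `ℚ(t)`. -/
noncomputable def tQ : RatFunc ℚ := RatFunc.X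

section QAnalogue

variable {R : Type*} [CommSemiring R] (q : R)

def qInt (n : ℕ) : R := ∑ m ∈ Finset.range n, q ^ m

def qFactorial (n : ℕ) : R := ∏ m ∈ Finset.range n, qInt q (m + 1)

@[simp] theorem qInt_one : qInt q 1 = 1 := by simp [qInt]

@[simp] theorem qFactorial_zero : qFactorial q 0 = 1 := rfl

theorem qFactorial_succ (n : ℕ) : qFactorial q (n + 1) = qFactorial q n * qInt q (n + 1) :=
  Finset.prod_range_succ _ _

theorem qFactorial_ne_zero [NoZeroDivisors R] [Nontrivial R] (hq : ∀ n, qInt q (n + 1) ≠ 0)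
    (n : ℕ) : qFactorial q n ≠ 0 :=
  Finset.prod_ne_zero_iff.mpr fun m _ => hq m

end QAnalogue

section QIdentity

variable {K : Type*} [Field K] (q : K)

theorem qInt_four_term_identity (hq : q ≠ 1) (a b c : ℕ) :
    qInt q (a + c + 3) * qInt q (a + c + 4) * qInt q (a + b + 3) * qInt q (a + b + 4) =
      qInt q (a + 1) * qInt q (a + 2) * qInt q (a + b + c + 5) * qInt q (a + b + c + 6) +
      q ^ (a + 1) * qInt q 2 * qInt q (a + 2) * qInt q (b + 2) * qInt q (c + 2) *
        qInt q (a + b + c + 5) +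
      q ^ (2 * a + 4) * qInt q (b + 1) * qInt q (b + 2) * qInt q (c + 1) * qInt q (c + 2) := by
  have hq' : q - 1 ≠ 0 := sub_ne_zero.mpr hq
  simp only [qInt, geom_sum_eq hq]
  field_simp
  ring

theorem qFactorial_identity (hq : q ≠ 1) (hq₀ : ∀ n, qInt q (n + 1) ≠ 0) (a b c : ℕ) :
    qFactorial q (a + b + 4) * qFactorial q (a + b + c + 4) /
        (qFactorial q (a + 2) * qFactorial q (b + 2) * qFactorial q (c + 2) *
          qFactorial q (a + b + 2)) =
      qFactorial q (a + c + 2) * qFactorial q (a + b + c + 6) /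
        (qFactorial q (c + 2) * qFactorial q a * qFactorial q (a + c + 4) * qFactorial q (b + 2)) +
      q ^ (a + 1) * qFactorial q 2 * qFactorial q (a + c + 2) * qFactorial q (a + b + c + 5) /
        (qFactorial q (c + 1) * qFactorial q (a + 1) * qFactorial q (a + c + 4) *
          qFactorial q (b + 1)) +
      q ^ (2 * a + 4) * qFactorial q 2 * qFactorial q (a + c + 2) * qFactorial q (a + b + c + 4) /
        (qFactorial q 2 * qFactorial q c * qFactorial q (a + 2) * qFactorial q (a + c + 4) *
          qFactorial q b) := by
  have hF := qFactorial_ne_zero q hq₀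
  have hX : qFactorial q (a + 2) * qFactorial q (b + 2) * qFactorial q (c + 2) *
      qInt q (a + c + 3) * qInt q (a + c + 4) / qFactorial q (a + b + c + 4) ≠ 0 := by
    simp [hF, hq₀]
  refine mul_right_cancel₀ hX ?_
  convert qInt_four_term_identity q hq a b c using 1 <;>
    simp only [qFactorial_succ, qFactorial_zero, zero_add, qInt_one] <;>
    field_simp [hq₀, hF]

end QIdentity

theorem PQ_eq_qFactorial (α : ℤ) : PQ α = qFactorial (tQ ^ 2) α.toNat := by
  simp [PQ, Ppoly, hpoly, qFactorial, qInt, tQ, pow_mul]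

theorem tQ_sq_ne_one : tQ ^ 2 ≠ 1 := by
  have h : (X ^ 2 : ℚ[X]) ≠ 1 := fun h => by simpa using congrArg (eval 0) h
  simpa [tQ] using (RatFunc.algebraMap_injective ℚ).ne h

theorem hpoly_ne_zero (α : ℤ) : hpoly α ≠ 0 := fun h => by
  simpa [hpoly, eval_finsetSum, Nat.cast_add_one_ne_zero] using congrArg (eval 1) h

theorem qInt_tQ_sq_ne_zero (n : ℕ) : qInt (tQ ^ 2) (n + 1) ≠ 0 := by
  have h : qInt (tQ ^ 2) (n + 1) = hQ n := by simp [hQ, hpoly, qInt, tQ, pow_mul]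
  exact h ▸ RatFunc.algebraMap_ne_zero (hpoly_ne_zero n)

/-- Identity (5.4) of the Appendix: the global identity in the case
`k = c + 2 = r + i`, `l = j + c`, i.e. `2 = k - c < k - i`. -/
theorem global_identity_case_k_sub_c_eq_two
    (i j r : ℤ) (hi : 2 ≤ i) (hj : j ≥ i + 2) (hr : 2 ≤ r) :
    PQ j * PQ (j + r - 2) / (PQ i * PQ (j - i) * PQ r * PQ (j - 2)) =
      PQ (r + i - 2) * PQ (r + j) /
        (PQ r * PQ (i - 2) * PQ (r + i) * PQ (j - i)) +
      tQ ^ (2 * (i - 1)).toNat * PQ 2 * PQ (r + i - 2) * PQ (r + j - 1) /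
        (PQ (r - 1) * PQ (i - 1) * PQ (r + i) * PQ (j - i - 1)) +
      tQ ^ (4 * i).toNat * PQ 2 * PQ (r + i - 2) * PQ (r + j - 2) /
        (PQ 2 * PQ (r - 2) * PQ i * PQ (r + i) * PQ (j - i - 2)) := by
  obtain ⟨a, rfl⟩ := Int.le.dest hi
  obtain ⟨b, rfl⟩ := Int.le.dest hj
  obtain ⟨c, rfl⟩ := Int.le.dest hr
  simp only [PQ_eq_qFactorial]
  rw [show (2 * (2 + (a : ℤ) - 1)).toNat = 2 * (a + 1) by omega,
    show (4 * (2 + (a : ℤ))).toNat = 2 * (2 * a + 4) by omega, pow_mul, pow_mul]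
  convert qFactorial_identity (tQ ^ 2) tQ_sq_ne_one qInt_tQ_sq_ne_zero a b c using 10 <;> omega
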